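/- Each σ_j (j ∈ I) is a ℂ(q)-linear automorphism of 𝒜, and for every pair i ≠ j in I the braid relation of order m_{ij} holds: σ_i∘σ_j∘σ_i∘⋯ = σ_j∘σ_i∘σ_j∘⋯, with m_{ij} factors on each side. -/

import Mathlib

noncomputable section
/-- The value `m_{ij}` of the Coxeter matrix attached to `t = a_{ij}·a_{ji}`:
`2, 3, 4, 6` according as `t = 0, 1, 2, 3`. -/
def coxEntry (t : ℤ) : ℕ :=
  if t = 0 then 2 else if t = 1 then 3 else if t = 2 then 4 else 6

/-- A generalized Cartan matrix `(a_{ij})` of finite type, with symmetrizing positive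
integers `(d_i)`, together with its Coxeter matrix `(m_{ij})` whose associated Coxeter
group is required to be finite. -/
structure FiniteCartan (I : Type) where
  a : I → I → ℤ
  d : I → ℤ
  cm : CoxeterMatrix I
  a_diag : ∀ i, a i i = 2
  a_offdiag_nonpos : ∀ i j, i ≠ j → a i j ≤ 0
  d_pos : ∀ i, 0 < d i
  d_symmetrizes : ∀ i j, d i * a i j = d j * a j i
  a_bound : ∀ i j, i ≠ j → a i j * a j i ≤ 3
  cm_offdiag : ∀ i j, i ≠ j → cm i j = coxEntry (a i j * a j i)
  finiteWeyl : Finite cm.Group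

/-- `ε_{ij} = (-1)^{δ_{ij}}`. -/
def eps {I : Type} [DecidableEq I] (i j : I) : ℤ := if i = j then -1 else 1

/-- The alternating composition `f ∘ g ∘ f ∘ ⋯` with `n` factors. -/
def braidWord {α : Type*} (f g : α → α) : ℕ → (α → α)
  | 0 => id
  | n + 1 => f ∘ braidWord g f n

/-- The space `𝒜` of `I`-tuples of power series over `ℂ(q)` with zero constant term. -/
def Aset (I : Type) : Set (I → PowerSeries (RatFunc ℂ)) :=
  {mu | ∀ i, PowerSeries.constantCoeff (mu i) = 0}

/-- The operator `σ_j` on `𝒜`: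
`σ_j(μ)_i = μ_i + ε_{ij} Σ_{b=0}^{|a_{ij}|−1} rescale_{q^{d_i(|a_{ij}|−1−2b)+d_j}}(μ_j)`. -/
def sigmaA {I : Type} [DecidableEq I] (a : I → I → ℤ) (d : I → ℤ) (j : I)
    (mu : I → PowerSeries (RatFunc ℂ)) : I → PowerSeries (RatFunc ℂ) := fun i =>
  mu i + eps i j •
    ∑ b ∈ Finset.range (a i j).natAbs,
      PowerSeries.rescale
        ((RatFunc.X : RatFunc ℂ) ^ (d i * (((a i j).natAbs : ℤ) - 1 - 2 * (b : ℤ)) + d j))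
        (mu j)


namespace Stmt11Aux

open PowerSeries

abbrev KK := RatFunc ℂ

/-- generic column map at the coefficient level -/
def Tcol {I : Type} (j : I) (c : I → KK) (v : I → KK) (k : I) : KK := v k + c k * v j

/-- coefficient-level column of `σ_j` -/
def sigCol {I : Type} [DecidableEq I] (a : I → I → ℤ) (d : I → ℤ) (t : KK) (j k : I) : KK :=
  (eps k j : KK) * ∑ b ∈ Finset.range (a k j).natAbs,
      t ^ (d k * (((a k j).natAbs : ℤ) - 1 - 2 * (b : ℤ)) + d j)

/-- coefficient-level column of the inverse operator `τ_j` -/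
def tauCol {I : Type} [DecidableEq I] (a : I → I → ℤ) (d : I → ℤ) (t : KK) (j k : I) : KK :=
  (eps k j : KK) * ∑ b ∈ Finset.range (a k j).natAbs,
      t ^ (d k * (((a k j).natAbs : ℤ) - 1 - 2 * (b : ℤ)) + d j - 2 * d j)

/-- the inverse operator `τ_j` on tuples of power series -/
def tauA {I : Type} [DecidableEq I] (a : I → I → ℤ) (d : I → ℤ) (j : I)
    (mu : I → PowerSeries KK) : I → PowerSeries KK := fun i =>
  mu i + eps i j •
    ∑ b ∈ Finset.range (a i j).natAbs,
      PowerSeries.rescale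
        ((RatFunc.X : KK) ^ (d i * (((a i j).natAbs : ℤ) - 1 - 2 * (b : ℤ)) + d j - 2 * d j))
        (mu j)

lemma zpow_swap (x : KK) (e : ℤ) (n : ℕ) : (x ^ e) ^ n = (x ^ (n:ℤ)) ^ e := by
  rw [← zpow_natCast (x ^ e) n, ← zpow_mul, mul_comm, zpow_mul]

lemma coeff_sigmaA {I : Type} [DecidableEq I] (a : I → I → ℤ) (d : I → ℤ) (j : I)
    (mu : I → PowerSeries KK) (n : ℕ) (k : I) :
    PowerSeries.coeff n (sigmaA a d j mu k)
      = Tcol j (sigCol a d ((RatFunc.X : KK) ^ (n:ℤ)) j)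
          (fun l => PowerSeries.coeff n (mu l)) k := by
  simp only [sigmaA, Tcol, sigCol, map_add, map_zsmul, map_sum, PowerSeries.coeff_rescale,
    zpow_swap]
  simp only [zsmul_eq_mul]
  rw [← Finset.sum_mul]
  ring

lemma coeff_tauA {I : Type} [DecidableEq I] (a : I → I → ℤ) (d : I → ℤ) (j : I)
    (mu : I → PowerSeries KK) (n : ℕ) (k : I) :
    PowerSeries.coeff n (tauA a d j mu k)
      = Tcol j (tauCol a d ((RatFunc.X : KK) ^ (n:ℤ)) j)
          (fun l => PowerSeries.coeff n (mu l)) k := by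
  simp only [tauA, Tcol, tauCol, map_add, map_zsmul, map_sum, PowerSeries.coeff_rescale,
    zpow_swap]
  simp only [zsmul_eq_mul]
  rw [← Finset.sum_mul]
  ring

section Corners

variable {I : Type} [DecidableEq I] (a : I → I → ℤ) (d : I → ℤ) (t : KK)

lemma sigCol_diag (k : I) (h : a k k = 2) :
    sigCol a d t k k = -((t ^ (d k)) ^ (2:ℕ) + 1) := by
  simp [sigCol, eps, h, Finset.sum_range_succ]
  rw [show d k + d k = d k * 2 by ring, zpow_mul, zpow_ofNat]

lemma sigCol_zero (j k : I) (h : a k j = 0) : sigCol a d t j k = 0 := by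
  simp [sigCol, h]

lemma sigCol_neg_one (j k : I) (hne : k ≠ j) (h : a k j = -1) :
    sigCol a d t j k = t ^ (d j) := by
  simp [sigCol, eps, h, hne, Finset.sum_range_one]

lemma sigCol_neg_two (j k : I) (hne : k ≠ j) (h : a k j = -2) :
    sigCol a d t j k = t ^ (d k + d j) + t ^ (d j - d k) := by
  simp [sigCol, eps, h, hne, Finset.sum_range_succ]
  congr 1
  ring

lemma sigCol_neg_three (j k : I) (hne : k ≠ j) (h : a k j = -3) :
    sigCol a d t j k = t ^ (2 * d k + d j) + t ^ (d j) + t ^ (d j - 2 * d k) := by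
  simp [sigCol, eps, h, hne, Finset.sum_range_succ]
  rw [show (-(d k * 2) + d j : ℤ) = d j - 2 * d k by ring,
    show (d k * 2 + d j : ℤ) = 2 * d k + d j by ring]

end Corners

section CoreBraid

variable {I : Type} (i j : I) (ci cj : I → KK)

lemma braid_two (h1 : ci j = 0) (h2 : cj i = 0) :
    braidWord (Tcol i ci) (Tcol j cj) 2 = braidWord (Tcol j cj) (Tcol i ci) 2 := by
  funext v k
  show Tcol i ci (Tcol j cj v) k = Tcol j cj (Tcol i ci v) k
  simp only [Tcol, h1, h2]
  ring

lemma braid_three (s : KK) (h1 : ci i = -(s^2+1)) (h2 : cj j = -(s^2+1))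
    (h3 : ci j = s) (h4 : cj i = s) :
    braidWord (Tcol i ci) (Tcol j cj) 3 = braidWord (Tcol j cj) (Tcol i ci) 3 := by
  funext v k
  show Tcol i ci (Tcol j cj (Tcol i ci v)) k = Tcol j cj (Tcol i ci (Tcol j cj v)) k
  simp only [Tcol, h1, h2, h3, h4]
  ring

lemma braid_four (s : KK) (h1 : ci i = -(s^4+1)) (h2 : cj j = -(s^2+1))
    (h3 : ci j = s^3+s) (h4 : cj i = s) :
    braidWord (Tcol i ci) (Tcol j cj) 4 = braidWord (Tcol j cj) (Tcol i ci) 4 := by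
  funext v k
  show Tcol i ci (Tcol j cj (Tcol i ci (Tcol j cj v))) k
      = Tcol j cj (Tcol i ci (Tcol j cj (Tcol i ci v))) k
  simp only [Tcol, h1, h2, h3, h4]
  ring

lemma braid_six (s : KK) (h1 : ci i = -(s^6+1)) (h2 : cj j = -(s^2+1))
    (h3 : ci j = s^5+s^3+s) (h4 : cj i = s) :
    braidWord (Tcol i ci) (Tcol j cj) 6 = braidWord (Tcol j cj) (Tcol i ci) 6 := by
  funext v k
  show Tcol i ci (Tcol j cj (Tcol i ci (Tcol j cj (Tcol i ci (Tcol j cj v))))) k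
      = Tcol j cj (Tcol i ci (Tcol j cj (Tcol i ci (Tcol j cj (Tcol i ci v))))) k
  simp only [Tcol, h1, h2, h3, h4]
  ring

end CoreBraid

lemma coeff_braidWord {I : Type} (n : ℕ) :
    ∀ (m : ℕ) (S T : (I → PowerSeries KK) → (I → PowerSeries KK))
      (s t : (I → KK) → (I → KK)),
      (∀ mu k, PowerSeries.coeff n (S mu k) = s (fun l => PowerSeries.coeff n (mu l)) k) →
      (∀ mu k, PowerSeries.coeff n (T mu k) = t (fun l => PowerSeries.coeff n (mu l)) k) →
      ∀ mu k, PowerSeries.coeff n (braidWord S T m mu k)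
        = braidWord s t m (fun l => PowerSeries.coeff n (mu l)) k
  | 0, S, T, s, t, hS, hT, mu, k => rfl
  | (m+1), S, T, s, t, hS, hT, mu, k => by
    show PowerSeries.coeff n (S (braidWord T S m mu) k)
      = s (braidWord t s m (fun l => PowerSeries.coeff n (mu l))) k
    rw [hS]
    congr 1
    funext l
    exact coeff_braidWord n m T S t s hT hS mu l

section Inverse

variable {I : Type} [DecidableEq I] (a : I → I → ℤ) (d : I → ℤ)

lemma Tcol_Tcol (j : I) (c c' v : I → KK) (k : I) :
    Tcol j c' (Tcol j c v) k = v k + (c k + c' k * (1 + c j)) * v j := by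
  simp only [Tcol]
  ring

lemma tau_sig_col (t : KK) (ht : t ≠ 0) (j : I) (hjj : a j j = 2) (k : I) :
    sigCol a d t j k + tauCol a d t j k * (1 + sigCol a d t j j) = 0 := by
  rw [sigCol_diag a d t j hjj]
  have hterm : ∀ b ∈ Finset.range (a k j).natAbs,
      t ^ (d k * (((a k j).natAbs : ℤ) - 1 - 2 * (b : ℤ)) + d j - 2 * d j) * (t ^ (d j)) ^ (2:ℕ)
        = t ^ (d k * (((a k j).natAbs : ℤ) - 1 - 2 * (b : ℤ)) + d j) := by
    intro b _
    rw [← zpow_ofNat, ← zpow_mul, ← zpow_add₀ ht]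
    congr 1 <;> ring
  have h2 : (∑ b ∈ Finset.range (a k j).natAbs,
        t ^ (d k * (((a k j).natAbs : ℤ) - 1 - 2 * (b : ℤ)) + d j - 2 * d j)) * (t ^ (d j)) ^ (2:ℕ)
      = ∑ b ∈ Finset.range (a k j).natAbs,
        t ^ (d k * (((a k j).natAbs : ℤ) - 1 - 2 * (b : ℤ)) + d j) := by
    rw [Finset.sum_mul]
    exact Finset.sum_congr rfl hterm
  simp only [sigCol, tauCol]
  rw [← h2]
  ring

lemma tau_diag (t : KK) (j : I) (hjj : a j j = 2) :
    tauCol a d t j j = -(1 + t ^ (-(2 * d j))) := by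
  simp [tauCol, eps, hjj, Finset.sum_range_succ]
  rw [show (d j + d j - 2 * d j : ℤ) = 0 by ring, zpow_zero]

lemma sig_tau_col (t : KK) (ht : t ≠ 0) (j : I) (hjj : a j j = 2) (k : I) :
    tauCol a d t j k + sigCol a d t j k * (1 + tauCol a d t j j) = 0 := by
  rw [tau_diag a d t j hjj]
  have hterm : ∀ b ∈ Finset.range (a k j).natAbs,
      t ^ (d k * (((a k j).natAbs : ℤ) - 1 - 2 * (b : ℤ)) + d j) * t ^ (-(2 * d j))
        = t ^ (d k * (((a k j).natAbs : ℤ) - 1 - 2 * (b : ℤ)) + d j - 2 * d j) := by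
    intro b _
    rw [← zpow_add₀ ht]
    congr 1 <;> ring
  have h2 : (∑ b ∈ Finset.range (a k j).natAbs,
        t ^ (d k * (((a k j).natAbs : ℤ) - 1 - 2 * (b : ℤ)) + d j)) * t ^ (-(2 * d j))
      = ∑ b ∈ Finset.range (a k j).natAbs,
        t ^ (d k * (((a k j).natAbs : ℤ) - 1 - 2 * (b : ℤ)) + d j - 2 * d j) := by
    rw [Finset.sum_mul]
    exact Finset.sum_congr rfl hterm
  simp only [sigCol, tauCol]
  rw [← h2]
  ring

lemma X_zpow_ne_zero (n : ℕ) : ((RatFunc.X : KK) ^ (n:ℤ)) ≠ 0 :=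
  zpow_ne_zero _ RatFunc.X_ne_zero

lemma tauA_sigmaA (j : I) (hjj : a j j = 2) (mu : I → PowerSeries KK) :
    tauA a d j (sigmaA a d j mu) = mu := by
  funext k
  apply PowerSeries.ext
  intro n
  rw [coeff_tauA]
  rw [show (fun l => PowerSeries.coeff n (sigmaA a d j mu l))
      = Tcol j (sigCol a d ((RatFunc.X : KK) ^ (n:ℤ)) j)
          (fun l => PowerSeries.coeff n (mu l)) from funext (coeff_sigmaA a d j mu n)]
  rw [Tcol_Tcol, tau_sig_col a d _ (X_zpow_ne_zero n) j hjj k]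
  ring

lemma sigmaA_tauA (j : I) (hjj : a j j = 2) (mu : I → PowerSeries KK) :
    sigmaA a d j (tauA a d j mu) = mu := by
  funext k
  apply PowerSeries.ext
  intro n
  rw [coeff_sigmaA]
  rw [show (fun l => PowerSeries.coeff n (tauA a d j mu l))
      = Tcol j (tauCol a d ((RatFunc.X : KK) ^ (n:ℤ)) j)
          (fun l => PowerSeries.coeff n (mu l)) from funext (coeff_tauA a d j mu n)]
  rw [Tcol_Tcol, sig_tau_col a d _ (X_zpow_ne_zero n) j hjj k]
  ring

lemma sigmaA_mem (j : I) (mu : I → PowerSeries KK) (hmu : mu ∈ Aset I) :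
    sigmaA a d j mu ∈ Aset I := by
  intro i
  rw [← PowerSeries.coeff_zero_eq_constantCoeff_apply, coeff_sigmaA]
  simp only [Tcol, PowerSeries.coeff_zero_eq_constantCoeff_apply]
  rw [hmu i, hmu j]
  ring

lemma tauA_mem (j : I) (mu : I → PowerSeries KK) (hmu : mu ∈ Aset I) :
    tauA a d j mu ∈ Aset I := by
  intro i
  rw [← PowerSeries.coeff_zero_eq_constantCoeff_apply, coeff_tauA]
  simp only [Tcol, PowerSeries.coeff_zero_eq_constantCoeff_apply]
  rw [hmu i, hmu j]
  ring

lemma sigmaA_linear (j : I) (c : KK) (x y : I → PowerSeries KK) :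
    sigmaA a d j (c • x + y) = c • sigmaA a d j x + sigmaA a d j y := by
  funext i
  apply PowerSeries.ext
  intro n
  simp only [Pi.add_apply, Pi.smul_apply, map_add, PowerSeries.coeff_smul, coeff_sigmaA, Tcol,
    smul_eq_mul]
  ring

end Inverse

lemma classify {I : Type} [Fintype I] [DecidableEq I] (C : FiniteCartan I) (i j : I)
    (hij : i ≠ j) :
    (C.a i j = 0 ∧ C.a j i = 0) ∨
    (C.a i j = -1 ∧ C.a j i = -1 ∧ C.d i = C.d j) ∨
    (C.a i j = -1 ∧ C.a j i = -2 ∧ C.d i = 2 * C.d j) ∨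
    (C.a i j = -2 ∧ C.a j i = -1 ∧ C.d j = 2 * C.d i) ∨
    (C.a i j = -1 ∧ C.a j i = -3 ∧ C.d i = 3 * C.d j) ∨
    (C.a i j = -3 ∧ C.a j i = -1 ∧ C.d j = 3 * C.d i) := by
  have hp := C.a_offdiag_nonpos i j hij
  have hq := C.a_offdiag_nonpos j i hij.symm
  have hb := C.a_bound i j hij
  have hs := C.d_symmetrizes i j
  have hdi := C.d_pos i
  have hdj := C.d_pos j
  by_cases hp0 : C.a i j = 0
  · left
    refine ⟨hp0, ?_⟩
    rw [hp0, mul_zero] at hs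
    nlinarith
  · have hq0 : C.a j i ≠ 0 := by
      intro h
      rw [h, mul_zero] at hs
      exact hp0 (by nlinarith)
    have hp1 : C.a i j ≤ -1 := by omega
    have hq1 : C.a j i ≤ -1 := by omega
    have hp3 : -3 ≤ C.a i j := by nlinarith
    have hq3 : -3 ≤ C.a j i := by nlinarith
    interval_cases h1 : C.a i j <;> interval_cases h2 : C.a j i <;>
      first
        | (right; left; exact ⟨rfl, rfl, by omega⟩)
        | (right; right; left; exact ⟨rfl, rfl, by omega⟩)
        | (right; right; right; left; exact ⟨rfl, rfl, by omega⟩)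
        | (right; right; right; right; left; exact ⟨rfl, rfl, by omega⟩)
        | (right; right; right; right; right; exact ⟨rfl, rfl, by omega⟩)
        | norm_num at hb

end Stmt11Aux

open Stmt11Aux in
/-- each `σ_j` is a `ℂ(q)`-linear automorphism of `𝒜`, and the braid
relations of order `m_{ij}` hold. -/
theorem sigmaA_automorphism_and_braid
    {I : Type} [Fintype I] [DecidableEq I] (𝒞 : FiniteCartan I) :
    (∀ j : I,
      (∀ (c : RatFunc ℂ) (x y : I → PowerSeries (RatFunc ℂ)), x ∈ Aset I → y ∈ Aset I →
        sigmaA 𝒞.a 𝒞.d j (c • x + y) = c • sigmaA 𝒞.a 𝒞.d j x + sigmaA 𝒞.a 𝒞.d j y) ∧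
      Set.BijOn (sigmaA 𝒞.a 𝒞.d j) (Aset I) (Aset I)) ∧
    (∀ i j : I, i ≠ j →
      Set.EqOn (braidWord (sigmaA 𝒞.a 𝒞.d i) (sigmaA 𝒞.a 𝒞.d j) (𝒞.cm i j))
        (braidWord (sigmaA 𝒞.a 𝒞.d j) (sigmaA 𝒞.a 𝒞.d i) (𝒞.cm i j)) (Aset I)) := by
  constructor
  · intro j
    refine ⟨fun c x y _ _ => sigmaA_linear 𝒞.a 𝒞.d j c x y, ?_, ?_, ?_⟩
    · intro mu hmu
      exact sigmaA_mem 𝒞.a 𝒞.d j mu hmu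
    · intro x _ y _ h
      have := congrArg (tauA 𝒞.a 𝒞.d j) h
      rwa [tauA_sigmaA 𝒞.a 𝒞.d j (𝒞.a_diag j), tauA_sigmaA 𝒞.a 𝒞.d j (𝒞.a_diag j)] at this
    · intro w hw
      exact ⟨tauA 𝒞.a 𝒞.d j w, tauA_mem 𝒞.a 𝒞.d j w hw,
        sigmaA_tauA 𝒞.a 𝒞.d j (𝒞.a_diag j) w⟩
  · intro i j hij mu _
    funext k
    apply PowerSeries.ext
    intro n
    set t : KK := (RatFunc.X : KK) ^ (n:ℤ) with htdef
    have hSi := coeff_sigmaA 𝒞.a 𝒞.d i (n := n)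
    have hSj := coeff_sigmaA 𝒞.a 𝒞.d j (n := n)
    have hdiagi := sigCol_diag 𝒞.a 𝒞.d t i (𝒞.a_diag i)
    have hdiagj := sigCol_diag 𝒞.a 𝒞.d t j (𝒞.a_diag j)
    rcases classify 𝒞 i j hij with ⟨h1, h2⟩ | ⟨h1, h2, hd⟩ | ⟨h1, h2, hd⟩ | ⟨h1, h2, hd⟩ |
        ⟨h1, h2, hd⟩ | ⟨h1, h2, hd⟩
    · have hm : 𝒞.cm i j = 2 := by rw [𝒞.cm_offdiag i j hij, h1, h2]; rfl
      rw [hm, coeff_braidWord n 2 _ _ _ _ (fun mu k => hSi mu k) (fun mu k => hSj mu k),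
        coeff_braidWord n 2 _ _ _ _ (fun mu k => hSj mu k) (fun mu k => hSi mu k)]
      exact congrFun (congrFun (braid_two i j _ _
        (sigCol_zero 𝒞.a 𝒞.d t i j h2)
        (sigCol_zero 𝒞.a 𝒞.d t j i h1)) _) k
    · have hm : 𝒞.cm i j = 3 := by rw [𝒞.cm_offdiag i j hij, h1, h2]; rfl
      rw [hm, coeff_braidWord n 3 _ _ _ _ (fun mu k => hSi mu k) (fun mu k => hSj mu k),
        coeff_braidWord n 3 _ _ _ _ (fun mu k => hSj mu k) (fun mu k => hSi mu k)]
      refine congrFun (congrFun (braid_three i j _ _ (t ^ (𝒞.d j)) ?_ ?_ ?_ ?_) _) k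
      · rw [hdiagi, hd]
      · rw [hdiagj]
      · rw [sigCol_neg_one 𝒞.a 𝒞.d t i j hij.symm h2, hd]
      · exact sigCol_neg_one 𝒞.a 𝒞.d t j i hij h1
    · -- a i j = -1, a j i = -2, d i = 2 d j
      have hm : 𝒞.cm i j = 4 := by rw [𝒞.cm_offdiag i j hij, h1, h2]; rfl
      rw [hm, coeff_braidWord n 4 _ _ _ _ (fun mu k => hSi mu k) (fun mu k => hSj mu k),
        coeff_braidWord n 4 _ _ _ _ (fun mu k => hSj mu k) (fun mu k => hSi mu k)]
      refine congrFun (congrFun (braid_four i j _ _ (t ^ (𝒞.d j)) ?_ ?_ ?_ ?_) _) k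
      · rw [hdiagi, hd, show (2 * 𝒞.d j : ℤ) = 𝒞.d j * 2 by ring, zpow_mul, zpow_ofNat]
        ring
      · rw [hdiagj]
      · rw [sigCol_neg_two 𝒞.a 𝒞.d t i j hij.symm h2, hd,
          show (𝒞.d j + 2 * 𝒞.d j : ℤ) = 𝒞.d j * 3 by ring,
          show (2 * 𝒞.d j - 𝒞.d j : ℤ) = 𝒞.d j by ring, zpow_mul, zpow_ofNat]
      · exact sigCol_neg_one 𝒞.a 𝒞.d t j i hij h1
    · -- a i j = -2, a j i = -1, d j = 2 d i
      have hm : 𝒞.cm i j = 4 := by rw [𝒞.cm_offdiag i j hij, h1, h2]; rfl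
      rw [hm, coeff_braidWord n 4 _ _ _ _ (fun mu k => hSi mu k) (fun mu k => hSj mu k),
        coeff_braidWord n 4 _ _ _ _ (fun mu k => hSj mu k) (fun mu k => hSi mu k)]
      refine congrFun (congrFun (braid_four j i _ _ (t ^ (𝒞.d i)) ?_ ?_ ?_ ?_).symm _) k
      · rw [hdiagj, hd, show (2 * 𝒞.d i : ℤ) = 𝒞.d i * 2 by ring, zpow_mul, zpow_ofNat]
        ring
      · rw [hdiagi]
      · rw [sigCol_neg_two 𝒞.a 𝒞.d t j i hij h1, hd,
          show (𝒞.d i + 2 * 𝒞.d i : ℤ) = 𝒞.d i * 3 by ring,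
          show (2 * 𝒞.d i - 𝒞.d i : ℤ) = 𝒞.d i by ring, zpow_mul, zpow_ofNat]
      · exact sigCol_neg_one 𝒞.a 𝒞.d t i j hij.symm h2
    · -- a i j = -1, a j i = -3, d i = 3 d j
      have hm : 𝒞.cm i j = 6 := by rw [𝒞.cm_offdiag i j hij, h1, h2]; rfl
      rw [hm, coeff_braidWord n 6 _ _ _ _ (fun mu k => hSi mu k) (fun mu k => hSj mu k),
        coeff_braidWord n 6 _ _ _ _ (fun mu k => hSj mu k) (fun mu k => hSi mu k)]
      refine congrFun (congrFun (braid_six i j _ _ (t ^ (𝒞.d j)) ?_ ?_ ?_ ?_) _) k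
      · rw [hdiagi, hd, show (3 * 𝒞.d j : ℤ) = 𝒞.d j * 3 by ring, zpow_mul, zpow_ofNat]
        ring
      · rw [hdiagj]
      · rw [sigCol_neg_three 𝒞.a 𝒞.d t i j hij.symm h2, hd,
          show (2 * 𝒞.d j + 3 * 𝒞.d j : ℤ) = 𝒞.d j * 5 by ring,
          show (3 * 𝒞.d j - 2 * 𝒞.d j : ℤ) = 𝒞.d j by ring,
          show (3 * 𝒞.d j : ℤ) = 𝒞.d j * 3 by ring, zpow_mul, zpow_mul, zpow_ofNat, zpow_ofNat]
      · exact sigCol_neg_one 𝒞.a 𝒞.d t j i hij h1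
    · -- a i j = -3, a j i = -1, d j = 3 d i
      have hm : 𝒞.cm i j = 6 := by rw [𝒞.cm_offdiag i j hij, h1, h2]; rfl
      rw [hm, coeff_braidWord n 6 _ _ _ _ (fun mu k => hSi mu k) (fun mu k => hSj mu k),
        coeff_braidWord n 6 _ _ _ _ (fun mu k => hSj mu k) (fun mu k => hSi mu k)]
      refine congrFun (congrFun (braid_six j i _ _ (t ^ (𝒞.d i)) ?_ ?_ ?_ ?_).symm _) k
      · rw [hdiagj, hd, show (3 * 𝒞.d i : ℤ) = 𝒞.d i * 3 by ring, zpow_mul, zpow_ofNat]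
        ring
      · rw [hdiagi]
      · rw [sigCol_neg_three 𝒞.a 𝒞.d t j i hij h1, hd,
          show (2 * 𝒞.d i + 3 * 𝒞.d i : ℤ) = 𝒞.d i * 5 by ring,
          show (3 * 𝒞.d i - 2 * 𝒞.d i : ℤ) = 𝒞.d i by ring,
          show (3 * 𝒞.d i : ℤ) = 𝒞.d i * 3 by ring, zpow_mul, zpow_mul, zpow_ofNat, zpow_ofNat]
      · exact sigCol_neg_one 𝒞.a 𝒞.d t i j hij.symm h2
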